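/- Let H be a real Hilbert space, K a nonempty convex subset of H, g : H → H a map, p > 1, μ > 0, and F : H → ℝ Fréchet differentiable and higher order strongly general convex with respect to g, i.e. F(g u + t·(g v − g u)) ≤ (1−t)·F(g u) + t·F(g v) − μ·(t^p·(1−t) + t·(1−t)^p)·‖g v − g u‖^p for all u, v with g u, g v ∈ K and all t ∈ [0,1]. Then ⟨∇F(g u) − ∇F(g v), g u − g v⟩ ≥ 2μ·‖g v − g u‖^p for all u, v ∈ H with g u, g v ∈ K. -/

import Mathlib

open scoped RealInnerProductSpace
open Filter Topology Set

/-!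
Along the segment from `x` to `y`, the strong convexity inequality says that the slope of
`t ↦ F (x + t • (y - x))` at `0` over `[0, t]` is at most
`F y - F x - μ (t ^ (p - 1) (1 - t) + (1 - t) ^ p) ‖y - x‖ ^ p`, which tends to
`F y - F x - μ ‖y - x‖ ^ p` as `t → 0⁺` because `p > 1`. Letting `t → 0⁺` gives the gradient
inequality `⟪∇F x, y - x⟫ ≤ F y - F x - μ ‖y - x‖ ^ p`; adding it to the same inequality with
`x` and `y` swapped gives the monotonicity estimate.
-/

theorem HasDerivAt.le_of_le_add_mul {f c : ℝ → ℝ} {f' L : ℝ} (hf : HasDerivAt f f' 0)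
    (hc : Tendsto c (𝓝[>] 0) (𝓝 L)) (hle : ∀ᶠ t in 𝓝[>] 0, f t ≤ f 0 + t * c t) :
    f' ≤ L := by
  have hslope : Tendsto (slope f 0) (𝓝[>] 0) (𝓝 f') :=
    (hasDerivAt_iff_tendsto_slope.mp hf).mono_left (nhdsWithin_mono _ fun _ ht => ne_of_gt ht)
  refine le_of_tendsto_of_tendsto hslope hc ?_
  filter_upwards [hle, self_mem_nhdsWithin] with t ht (htpos : 0 < t)
  rw [slope_def_field, sub_zero, div_le_iff₀ htpos]
  linarith

theorem HasGradientAt.hasDerivAt_comp_line {H : Type*} [NormedAddCommGroup H]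
    [InnerProductSpace ℝ H] [CompleteSpace H] {F : H → ℝ} {G x : H} (hF : HasGradientAt F G x)
    (d : H) : HasDerivAt (fun t : ℝ => F (x + t • d)) ⟪G, d⟫ 0 := by
  have hline : HasDerivAt (fun t : ℝ => x + t • d) d 0 := by
    simpa using ((hasDerivAt_id (0 : ℝ)).smul_const d).const_add x
  have hFx : HasFDerivAt F (InnerProductSpace.toDual ℝ H G) (x + (0 : ℝ) • d) := by
    simpa using hF.hasFDerivAt
  exact hFx.comp_hasDerivAt 0 hline

theorem tendsto_rpow_sub_one_mul_one_sub_add_one_sub_rpow {p : ℝ} (hp : 1 < p) :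
    Tendsto (fun t : ℝ => t ^ (p - 1) * (1 - t) + (1 - t) ^ p) (𝓝 0) (𝓝 1) := by
  have hcont : ContinuousAt (fun t : ℝ => t ^ (p - 1) * (1 - t) + (1 - t) ^ p) 0 := by
    have h₁ : ContinuousAt (fun t : ℝ => t ^ (p - 1)) 0 :=
      Real.continuousAt_rpow_const 0 (p - 1) (Or.inr (by linarith))
    have h₂ : ContinuousAt (fun t : ℝ => (1 - t) ^ p) 0 :=
      (continuous_const.sub continuous_id).continuousAt.rpow_const (Or.inl (by norm_num))
    fun_prop
  simpa [Real.zero_rpow (by linarith : p - 1 ≠ 0)] using hcont.tendsto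

theorem inner_gradient_le_of_strongConvex_segment {H : Type*} [NormedAddCommGroup H]
    [InnerProductSpace ℝ H] [CompleteSpace H] {F : H → ℝ} {G x y : H} {p μ : ℝ} (hp : 1 < p)
    (hF : HasGradientAt F G x)
    (hconv : ∀ t ∈ Icc (0 : ℝ) 1, F (x + t • (y - x)) ≤ (1 - t) * F x + t * F y
      - μ * (t ^ p * (1 - t) + t * (1 - t) ^ p) * ‖y - x‖ ^ p) :
    ⟪G, y - x⟫ ≤ F y - F x - μ * ‖y - x‖ ^ p := by
  have hc : Tendsto
      (fun t : ℝ => F y - F x - μ * (t ^ (p - 1) * (1 - t) + (1 - t) ^ p) * ‖y - x‖ ^ p)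
      (𝓝[>] 0) (𝓝 (F y - F x - μ * 1 * ‖y - x‖ ^ p)) :=
    (tendsto_const_nhds.sub
      (((tendsto_rpow_sub_one_mul_one_sub_add_one_sub_rpow hp).const_mul μ).mul_const _)).mono_left
      nhdsWithin_le_nhds
  rw [← mul_one μ]
  refine (hF.hasDerivAt_comp_line (y - x)).le_of_le_add_mul hc ?_
  filter_upwards [Ioc_mem_nhdsGT (zero_lt_one' ℝ)] with t ⟨htpos, ht1⟩
  have hpow : t ^ p = t * t ^ (p - 1) := by
    rw [← Real.rpow_one_add' htpos.le (by linarith)]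
    ring_nf
  have hseg := hconv t ⟨htpos.le, ht1⟩
  simp only [zero_smul, add_zero]
  rw [hpow] at hseg
  linarith

theorem stmt_9_general {H : Type*} [NormedAddCommGroup H] [InnerProductSpace ℝ H] [CompleteSpace H]
    (K : Set H)
    (g : H → H) (p μ : ℝ) (hp : 1 < p)
    (F : H → ℝ) (F' : H → H) (hF : ∀ x : H, HasGradientAt F (F' x) x)
    (hconv : ∀ u v : H, g u ∈ K → g v ∈ K → ∀ t ∈ Set.Icc (0 : ℝ) 1,
      F (g u + t • (g v - g u)) ≤ (1 - t) * F (g u) + t * F (g v)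
        - μ * (t ^ p * (1 - t) + t * (1 - t) ^ p) * ‖g v - g u‖ ^ p) :
    ∀ u v : H, g u ∈ K → g v ∈ K →
      2 * μ * ‖g v - g u‖ ^ p ≤ ⟪F' (g u) - F' (g v), g u - g v⟫ := by
  intro u v hu hv
  have huv := inner_gradient_le_of_strongConvex_segment hp (hF (g u)) (hconv u v hu hv)
  have hvu := inner_gradient_le_of_strongConvex_segment hp (hF (g v)) (hconv v u hv hu)
  rw [norm_sub_rev] at hvu
  have hsplit : ⟪F' (g u) - F' (g v), g u - g v⟫
      = -⟪F' (g u), g v - g u⟫ - ⟪F' (g v), g u - g v⟫ := by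
    rw [inner_sub_left, ← neg_sub (g v) (g u), inner_neg_right, inner_neg_right]
  linarith

theorem stmt_9 {H : Type*} [NormedAddCommGroup H] [InnerProductSpace ℝ H] [CompleteSpace H]
    (K : Set H) (hK : K.Nonempty) (hKconv : Convex ℝ K)
    (g : H → H) (p μ : ℝ) (hp : 1 < p) (hμ : 0 < μ)
    (F : H → ℝ) (F' : H → H) (hF : ∀ x : H, HasGradientAt F (F' x) x)
    (hconv : ∀ u v : H, g u ∈ K → g v ∈ K → ∀ t ∈ Set.Icc (0 : ℝ) 1,
      F (g u + t • (g v - g u)) ≤ (1 - t) * F (g u) + t * F (g v)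
        - μ * (t ^ p * (1 - t) + t * (1 - t) ^ p) * ‖g v - g u‖ ^ p) :
    ∀ u v : H, g u ∈ K → g v ∈ K →
      2 * μ * ‖g v - g u‖ ^ p ≤ ⟪F' (g u) - F' (g v), g u - g v⟫ :=
  stmt_9_general K g p μ hp F F' hF hconv
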